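/- arXiv:1508.00104 — 3 statements merged into one kernel-verified Lean document; each statement's English description precedes it below -/
import Mathlib

section
/- Let u = (x₀,y₀,z₀) with x₀+y₀+z₀ = 1 and define f_u(t) = (x(t), y(t), z(t)) by x(t) = (x₀ - (2x₀+y₀)²/4)e^{-t} + (2x₀+y₀)²/4, y(t) = -2(x₀ - (2x₀+y₀)²/4)e^{-t} - (2x₀+y₀)²/2 + 2x₀+y₀, z(t) = 1 - x(t) - y(t). Then f_u solves the ODE d/dt f_u(t) = F(f_u(t)) with f_u(0) = u, where F(x,y,z) = (xy + x² + y²/4 - x, xy + yz + 2xz + y²/2 - y, yz + z² + y²/4 - z). -/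
/-! With `p = 2x₀ + y₀`, the quantity `2x + y` equals `p` along the whole trajectory, and each
coordinate has the form `c e^{-t} + d` with `d` the Hardy–Weinberg proportion `p²/4`,
`p(2 - p)/2`, `(1 - p/2)²` respectively. Such a function satisfies `f' = d - f`, and once
`x + y/2 = p/2` and `z + y/2 = 1 - p/2` are substituted, each component of `F` reads exactly
`d - f`. -/

open Real

theorem hasDerivAt_of_forall_eq_mul_exp_neg_add {f : ℝ → ℝ} {c d : ℝ}
    (hf : ∀ s, f s = c * exp (-s) + d) (t : ℝ) : HasDerivAt f (d - f t) t := by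
  rw [hf t, show f = fun s => c * exp (-s) + d from funext hf]
  exact ((((hasDerivAt_neg t).exp).const_mul c).add_const d).congr_deriv (by ring)

/-- The explicit functions x(t), y(t), z(t) solve the ODE d/dt f = F(f)
with initial condition (x₀,y₀,z₀). -/
theorem stmt_7 (x₀ y₀ z₀ : ℝ) (hsum : x₀ + y₀ + z₀ = 1)
    (x y z : ℝ → ℝ)
    (hx : ∀ t, x t = (x₀ - (2*x₀ + y₀)^2/4) * Real.exp (-t) + (2*x₀ + y₀)^2/4)
    (hy : ∀ t, y t = -2*(x₀ - (2*x₀ + y₀)^2/4) * Real.exp (-t)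
                       - (2*x₀ + y₀)^2/2 + 2*x₀ + y₀)
    (hz : ∀ t, z t = 1 - x t - y t) :
    x 0 = x₀ ∧ y 0 = y₀ ∧ z 0 = z₀ ∧
    ∀ t : ℝ,
      HasDerivAt x (x t * y t + (x t)^2 + (y t)^2/4 - x t) t ∧
      HasDerivAt y (x t * y t + y t * z t + 2*(x t)*(z t) + (y t)^2/2 - y t) t ∧
      HasDerivAt z (y t * z t + (z t)^2 + (y t)^2/4 - z t) t := by
  set p := 2*x₀ + y₀
  set a := x₀ - p^2/4
  have hy_decay : ∀ s, y s = (-2*a) * exp (-s) + p*(2 - p)/2 := fun s => by rw [hy]; ring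
  have hz_decay : ∀ s, z s = a * exp (-s) + (1 - p/2)^2 := fun s => by rw [hz, hx, hy]; ring
  have hallele : ∀ s, 2 * x s + y s = p := fun s => by rw [hx, hy]; ring
  refine ⟨by simp [hx, a], by simp [hy, a, p]; ring, by simp [hz, hx, hy, a, p]; linarith,
    fun t => ?_⟩
  clear_value p a
  refine ⟨?_, ?_, ?_⟩
  · convert hasDerivAt_of_forall_eq_mul_exp_neg_add hx t using 1
    linear_combination (x t + y t/2 + p/2)/2 * hallele t
  · convert hasDerivAt_of_forall_eq_mul_exp_neg_add hy_decay t using 1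
    linear_combination (1 - x t - y t/2 - p/2) * hallele t + (2 * x t + y t) * hz t
  · convert hasDerivAt_of_forall_eq_mul_exp_neg_add hz_decay t using 1
    linear_combination (z t + y t/2 + 1 - p/2) * (hz t - hallele t / 2)
end

section
/- Along the ODE flow f_u(t) with F(x,y,z) = (xy + x² + y²/4 - x, xy + yz + 2xz + y²/2 - y, yz + z² + y²/4 - z), the allele frequency 2x(t) + y(t) is constant in time: for all t ≥ 0, 2x_u(t) + y_u(t) = 2x₀ + y₀. -/
/-- Along the flow of the genotype ODE, the allele frequency 2x(t) + y(t)
is conserved. -/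
theorem stmt_8 (x₀ y₀ z₀ : ℝ) (hsum : x₀ + y₀ + z₀ = 1)
    (x y z : ℝ → ℝ)
    (hx0 : x 0 = x₀) (hy0 : y 0 = y₀) (hz0 : z 0 = z₀)
    (hsimplex : ∀ t, x t + y t + z t = 1)
    (hdx : ∀ t, HasDerivAt x (x t * y t + (x t)^2 + (y t)^2/4 - x t) t)
    (hdy : ∀ t, HasDerivAt y
      (x t * y t + y t * z t + 2*(x t)*(z t) + (y t)^2/2 - y t) t)
    (hdz : ∀ t, HasDerivAt z (y t * z t + (z t)^2 + (y t)^2/4 - z t) t) :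
    ∀ t : ℝ, 0 ≤ t → 2 * x t + y t = 2 * x₀ + y₀ := by
  have key : ∀ t, HasDerivAt (fun s => 2 * x s + y s) 0 t := by
    intro t
    have h := ((hdx t).const_mul 2).add (hdy t)
    have hz : z t = 1 - x t - y t := by linarith [hsimplex t]
    have : 2 * (x t * y t + (x t)^2 + (y t)^2/4 - x t) +
        (x t * y t + y t * z t + 2*(x t)*(z t) + (y t)^2/2 - y t) = 0 := by
      rw [hz]; ring
    rwa [this] at h
  have hconst := is_const_of_deriv_eq_zero
    (f := fun s => 2 * x s + y s)
    (fun t => (key t).differentiableAt) (fun t => (key t).deriv)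
  intro t _
  have := hconst t 0
  rw [this, hx0, hy0]
end

section
/- For every u in the simplex {(x,y,z) ∈ [0,1]³ : x+y+z=1}, the point v(u) = ((2x₀+y₀)²/4, -(2x₀+y₀)²/2 + 2x₀+y₀, 1 + (2x₀+y₀)²/4 - 2x₀-y₀) satisfies F(v(u)) = 0, i.e., v maps the simplex into the zero set of F; moreover v(u) satisfies Hardy-Weinberg: its middle coordinate equals 2√(first coordinate × third coordinate) when 2x₀+y₀ ∈ [0,2]. -/
/-- v maps the simplex into the zero set of F, and v(u) satisfies
Hardy-Weinberg when 2x₀ + y₀ ∈ [0,2]. -/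
theorem stmt_11 (x₀ y₀ z₀ : ℝ)
    (hx₀ : x₀ ∈ Set.Icc (0:ℝ) 1) (hy₀ : y₀ ∈ Set.Icc (0:ℝ) 1)
    (hz₀ : z₀ ∈ Set.Icc (0:ℝ) 1) (hsum : x₀ + y₀ + z₀ = 1)
    (vx vy vz : ℝ)
    (hvx : vx = (2*x₀ + y₀)^2/4)
    (hvy : vy = -(2*x₀ + y₀)^2/2 + 2*x₀ + y₀)
    (hvz : vz = 1 + (2*x₀ + y₀)^2/4 - 2*x₀ - y₀) :
    (vx*vy + vx^2 + vy^2/4 - vx = 0 ∧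
     vx*vy + vy*vz + 2*vx*vz + vy^2/2 - vy = 0 ∧
     vy*vz + vz^2 + vy^2/4 - vz = 0) ∧
    (2*x₀ + y₀ ∈ Set.Icc (0:ℝ) 2 → vy = 2 * Real.sqrt (vx * vz)) := by
  subst hvx hvy hvz
  refine ⟨⟨by ring, by ring, by ring⟩, ?_⟩
  rintro ⟨hp0, hp2⟩
  set p := 2*x₀ + y₀ with hp
  have h1 : p^2/4 * (1 + p^2/4 - 2*x₀ - y₀) = (p*(2-p)/4)^2 := by rw [hp]; ring
  rw [h1, Real.sqrt_sq (by nlinarith)]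
  ring
end
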